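/- The sequence (α_n) converges to 1/4 as n → ∞. -/

import Mathlib

open Finset

/-- `S δ i = δ 1 + ⋯ + δ i`. -/
noncomputable def S (δ : ℕ → ℝ) (i : ℕ) : ℝ := ∑ k ∈ Finset.Icc 1 i, δ k

/-- `max {δ 1 / S 2, …, δ (n-1) / S n, δ n / S n}`.  For `i ≤ n - 1` we have
`min (i+1) n = i+1`, while for `i = n` we get `δ n / S n`. -/
noncomputable def maxRatio (n : ℕ) (δ : ℕ → ℝ) : ℝ :=
  (insert n (Finset.Icc 1 n)).sup' (Finset.insert_nonempty _ _)
    (fun i => δ i / S δ (min (i + 1) n))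

/-- `α n` is the infimum over positive vectors `δ` of the above maximum. -/
noncomputable def alpha (n : ℕ) : ℝ :=
  sInf {r : ℝ | ∃ δ : ℕ → ℝ, (∀ i ∈ Finset.Icc 1 n, 0 < δ i) ∧ r = maxRatio n δ}

/-! If every ratio is at most `1 / 4`, then `δ (j + 1) ≤ S (j + 2) / 4` turns
`S (j + 2) < 2 S (j + 1)` into `S (j + 1) < 2 S j`. This holds trivially at the top (where the
ratio is `δ n / S n`) and propagates down to `S 1 < 2 S 0 = 0`, which is absurd. Hence `α n ≥ 1 / 4`.

Conversely, making all ratios equal to `r` means `S (j + 1) - S j = r S (j + 2)`, a linear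
recurrence with characteristic roots `2 cos θ · e^{± iθ}` when `r = 1 / (4 cos² θ)`. Its solution
`(2 cos θ)^k sin (k θ)` vanishes at `0`, and for `θ = π / (n + 2)` it is positive on `1, …, n + 1`
with `S (n + 1) = S n`, which is the top condition. So `α n ≤ 1 / (4 cos² (π / (n + 2))) → 1 / 4`.
-/

open Real Filter Topology

lemma S_zero (δ : ℕ → ℝ) : S δ 0 = 0 := by
  simp [S]

lemma S_succ (δ : ℕ → ℝ) (i : ℕ) : S δ (i + 1) = S δ i + δ (i + 1) :=
  sum_Icc_succ_top (Nat.le_add_left 1 i) δ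

lemma S_pos {n : ℕ} {δ : ℕ → ℝ} (hδ : ∀ i ∈ Icc 1 n, 0 < δ i) {k : ℕ} (hk : k ∈ Icc 1 n) :
    0 < S δ k :=
  sum_pos (fun i hi => hδ i (Icc_subset_Icc_right (mem_Icc.1 hk).2 hi))
    (nonempty_Icc.2 (mem_Icc.1 hk).1)

lemma S_sub_pred {T : ℕ → ℝ} (hT : T 0 = 0) (i : ℕ) : S (fun k => T k - T (k - 1)) i = T i := by
  induction i with
  | zero => rw [S_zero, hT]
  | succ i ih => rw [S_succ, ih, add_tsub_cancel_right, add_sub_cancel]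

lemma div_S_le_maxRatio {n : ℕ} (δ : ℕ → ℝ) {i : ℕ} (hi : i ∈ Icc 1 n) :
    δ i / S δ (min (i + 1) n) ≤ maxRatio n δ :=
  le_sup' (fun i => δ i / S δ (min (i + 1) n)) (mem_insert_of_mem hi)

lemma lt_two_mul_of_sub_le_mul {a b c r : ℝ} (hr : r ≤ 1 / 4) (hc : 0 ≤ c) (hcb : c < 2 * b)
    (h : b - a ≤ r * c) : b < 2 * a := by
  linarith [mul_le_mul_of_nonneg_right hr hc]

theorem quarter_lt_maxRatio {n : ℕ} (hn : 1 ≤ n) {δ : ℕ → ℝ} (hδ : ∀ i ∈ Icc 1 n, 0 < δ i) :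
    1 / 4 < maxRatio n δ := by
  by_contra! hr
  have hmem : ∀ j < n, min (j + 2) n ∈ Icc 1 n := fun j hj =>
    mem_Icc.2 ⟨by omega, min_le_right _ _⟩
  have hstep : ∀ j < n, S δ (j + 1) - S δ j ≤ maxRatio n δ * S δ (min (j + 2) n) := by
    intro j hj
    rw [S_succ, add_sub_cancel_left, ← div_le_iff₀ (S_pos hδ (hmem j hj))]
    exact div_S_le_maxRatio δ (mem_Icc.2 ⟨by omega, hj⟩)
  have hdouble : ∀ j ≤ n, S δ (min (j + 1) n) < 2 * S δ j := by
    intro j hj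
    induction hj using Nat.decreasingInduction with
    | self =>
      rw [min_eq_right (Nat.le_succ n)]
      linarith [S_pos hδ (right_mem_Icc.2 hn)]
    | of_succ k hk ih =>
      rw [min_eq_left hk]
      exact lt_two_mul_of_sub_le_mul hr (S_pos hδ (hmem k hk)).le ih (hstep k hk)
  have h0 := hdouble 0 (Nat.zero_le n)
  rw [S_zero, zero_add, min_eq_left hn] at h0
  linarith [S_pos hδ (left_mem_Icc.2 hn)]

theorem quarter_le_alpha {n : ℕ} (hn : 1 ≤ n) : 1 / 4 ≤ alpha n :=
  le_csInf ⟨_, fun _ => 1, fun _ _ => one_pos, rfl⟩ <| by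
    rintro _ ⟨δ, hδ, rfl⟩
    exact (quarter_lt_maxRatio hn hδ).le

theorem alpha_le_maxRatio {n : ℕ} (hn : 1 ≤ n) {δ : ℕ → ℝ} (hδ : ∀ i ∈ Icc 1 n, 0 < δ i) :
    alpha n ≤ maxRatio n δ :=
  csInf_le ⟨1 / 4, by rintro _ ⟨δ', hδ', rfl⟩; exact (quarter_lt_maxRatio hn hδ').le⟩ ⟨δ, hδ, rfl⟩

-- The witness is `δ k = T k - T (k - 1)`: then `S δ = T` and every ratio equals `r`.
theorem alpha_le_of_recurrence {n : ℕ} (hn : 1 ≤ n) {r : ℝ} (hr : 0 < r) {T : ℕ → ℝ}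
    (hT0 : T 0 = 0) (hTpos : ∀ k ∈ Icc 1 n, 0 < T k)
    (hrec : ∀ j, T (j + 1) - T j = r * T (j + 2)) (htop : T (n + 1) = T n) : alpha n ≤ r := by
  have hmem : ∀ k ∈ Icc 1 n, min (k + 1) n ∈ Icc 1 n := fun k hk =>
    mem_Icc.2 ⟨le_min (by omega) hn, min_le_right _ _⟩
  have hδ : ∀ k ∈ Icc 1 n, T k - T (k - 1) = r * T (min (k + 1) n) := by
    intro k hk
    obtain ⟨j, rfl⟩ : ∃ j, k = j + 1 := ⟨k - 1, by grind⟩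
    rw [add_tsub_cancel_right, hrec]
    rcases (mem_Icc.1 hk).2.lt_or_eq with h | h
    · rw [min_eq_left h]
    · subst h
      rw [min_eq_right (Nat.le_succ _)]
      exact congrArg _ htop
  have hδpos : ∀ k ∈ Icc 1 n, 0 < T k - T (k - 1) := fun k hk => by
    rw [hδ k hk]
    exact mul_pos hr (hTpos _ (hmem k hk))
  have hratio : ∀ k ∈ insert n (Icc 1 n),
      (T k - T (k - 1)) / S (fun k => T k - T (k - 1)) (min (k + 1) n) = r := by
    intro k hk
    rw [insert_eq_of_mem (right_mem_Icc.2 hn)] at hk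
    rw [hδ k hk, S_sub_pred hT0, mul_div_cancel_right₀ _ (hTpos _ (hmem k hk)).ne']
  calc alpha n ≤ maxRatio n (fun k => T k - T (k - 1)) := alpha_le_maxRatio hn hδpos
    _ = r := by rw [maxRatio, sup'_congr _ rfl hratio, sup'_const]

noncomputable def sinSeq (θ : ℝ) (k : ℕ) : ℝ := (2 * cos θ) ^ k * sin (k * θ)

lemma sinSeq_zero (θ : ℝ) : sinSeq θ 0 = 0 := by
  simp [sinSeq]

lemma sinSeq_succ_sub {θ : ℝ} (hθ : cos θ ≠ 0) (j : ℕ) :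
    sinSeq θ (j + 1) - sinSeq θ j = 1 / (4 * cos θ ^ 2) * sinSeq θ (j + 2) := by
  have hsucc : ((j + 2 : ℕ) : ℝ) * θ = (j + 1 : ℕ) * θ + θ := by push_cast; ring
  have hpred : (j : ℝ) * θ = (j + 1 : ℕ) * θ - θ := by push_cast; ring
  simp only [sinSeq]
  rw [hsucc, hpred, sin_add, sin_sub]
  field_simp
  ring

lemma sin_mul_pi_div_pos {n k : ℕ} (hk : k ∈ Icc 1 (n + 1)) : 0 < sin (k * (π / (n + 2))) := by
  have hk' : (1 : ℝ) ≤ k ∧ (k : ℝ) < n + 2 := by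
    obtain ⟨h1, h2⟩ := mem_Icc.1 hk
    exact ⟨by exact_mod_cast h1, by exact_mod_cast Nat.lt_succ_of_le h2⟩
  apply sin_pos_of_pos_of_lt_pi (mul_pos (by linarith) (by positivity))
  rw [mul_div_assoc', div_lt_iff₀ (by positivity), mul_comm π]
  exact mul_lt_mul_of_pos_right hk'.2 pi_pos

lemma cos_pi_div_pos {n : ℕ} (hn : 1 ≤ n) : 0 < cos (π / (n + 2)) := by
  have : (2 : ℝ) < n + 2 := by
    have : (1 : ℝ) ≤ n := by exact_mod_cast hn
    linarith
  refine cos_pos_of_mem_Ioo ⟨by linarith [pi_pos, show 0 < π / (n + 2) by positivity], ?_⟩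
  exact div_lt_div_of_pos_left pi_pos two_pos this

lemma sinSeq_pos {n : ℕ} (hn : 1 ≤ n) {k : ℕ} (hk : k ∈ Icc 1 (n + 1)) :
    0 < sinSeq (π / (n + 2)) k :=
  mul_pos (pow_pos (mul_pos two_pos (cos_pi_div_pos hn)) k) (sin_mul_pi_div_pos hk)

lemma sinSeq_succ_eq_self (n : ℕ) : sinSeq (π / (n + 2)) (n + 1) = sinSeq (π / (n + 2)) n := by
  set θ := π / (n + 2)
  have hπ : (n + 2 : ℝ) * θ = π := mul_div_cancel₀ π (by positivity)
  have h1 : ((n + 1 : ℕ) : ℝ) * θ = π - θ := by push_cast; linarith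
  have h2 : (n : ℝ) * θ = π - 2 * θ := by linarith
  rw [sinSeq, sinSeq, h1, h2, sin_pi_sub, sin_pi_sub, sin_two_mul, pow_succ]
  ring

theorem alpha_le_one_div_four_mul_cos_sq {n : ℕ} (hn : 1 ≤ n) :
    alpha n ≤ 1 / (4 * cos (π / (n + 2)) ^ 2) :=
  alpha_le_of_recurrence hn (by have := cos_pi_div_pos hn; positivity) (sinSeq_zero _)
    (fun k hk => sinSeq_pos hn (Icc_subset_Icc_right (Nat.le_succ n) hk))
    (sinSeq_succ_sub (cos_pi_div_pos hn).ne') (sinSeq_succ_eq_self n)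

theorem alpha_tendsto_one_quarter :
    Filter.Tendsto (fun n : ℕ => alpha n) Filter.atTop (nhds (1 / 4)) := by
  have hθ : Tendsto (fun n : ℕ => π / ((n : ℝ) + 2)) atTop (𝓝 0) :=
    tendsto_const_nhds.div_atTop (tendsto_atTop_add_const_right _ 2 tendsto_natCast_atTop_atTop)
  have hupper : Tendsto (fun n : ℕ => 1 / (4 * cos (π / (n + 2)) ^ 2)) atTop (𝓝 (1 / 4)) := by
    have hcont : ContinuousAt (fun x => 1 / (4 * cos x ^ 2)) 0 := by
      fun_prop (disch := simp)
    simpa [Function.comp_def] using hcont.tendsto.comp hθ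
  refine tendsto_of_tendsto_of_tendsto_of_le_of_le' tendsto_const_nhds hupper ?_ ?_ <;>
    filter_upwards [eventually_ge_atTop 1] with n hn
  exacts [quarter_le_alpha hn, alpha_le_one_div_four_mul_cos_sq hn]
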